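/- For every real v with 0 ≤ v ≤ 1, every real b with c₁ ≤ b ≤ c₂ (0 < c₁ ≤ c₂ fixed), every real u ≥ 1, and every constant C > 0, one has (1 + C·v)·(1 - v²/2)^(b·u) ≤ 1 + C'/u for some constant C' depending only on c₁, c₂, C. In particular the product of (1+O(v)) and (1-v²/2)^{bu} is at most 1 + O(1/u) uniformly in 0 ≤ v ≤ 1. -/

import Mathlib

/-!
Bounding `1 - x` by `exp (-x)` turns the power into `exp (-y)` with
`y = b u v² / 2 ≥ c₁ u v² / 2`, and `exp (-y) ≤ 1 / (1 + y)`. So it suffices that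
`C v ≤ C' / u + y`, which is AM-GM: `C v ≤ C² / (2 c₁ u) + c₁ u v² / 2`.
Hence `C' = C² / (2 c₁)` works.
-/

open Real

lemma Real.one_sub_rpow_le_exp_neg_mul {x t : ℝ} (hx : x ≤ 1) (ht : 0 ≤ t) :
    (1 - x) ^ t ≤ exp (-(x * t)) := by
  calc (1 - x) ^ t ≤ exp (-x) ^ t := rpow_le_rpow (by linarith) (one_sub_le_exp_neg x) ht
    _ = exp (-(x * t)) := by rw [← exp_mul, neg_mul]

lemma Real.exp_neg_le_inv_one_add {y : ℝ} (hy : 0 ≤ y) : exp (-y) ≤ (1 + y)⁻¹ := by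
  rw [exp_neg]
  exact inv_anti₀ (by linarith) (by linarith [add_one_le_exp y])

lemma Real.one_add_mul_exp_neg_le {w y K : ℝ} (hw : 0 ≤ w) (hy : 0 ≤ y) (hK : 0 ≤ K)
    (hwK : w ≤ K + y) : (1 + w) * exp (-y) ≤ 1 + K := by
  calc (1 + w) * exp (-y) ≤ (1 + w) * (1 + y)⁻¹ := by
        gcongr; exact exp_neg_le_inv_one_add hy
    _ ≤ 1 + K := by
        rw [← div_eq_mul_inv, div_le_iff₀ (by linarith)]
        nlinarith [mul_nonneg hK hy]

lemma mul_le_sq_div_add_mul_sq {c : ℝ} (hc : 0 < c) (a v : ℝ) :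
    a * v ≤ a ^ 2 / (2 * c) + c * v ^ 2 / 2 := by
  have h := two_mul_le_add_mul_sq (a := a) (b := v) (inv_pos.mpr hc)
  rw [inv_inv] at h
  calc a * v ≤ (c⁻¹ * a ^ 2 + c * v ^ 2) / 2 := by linarith
    _ = a ^ 2 / (2 * c) + c * v ^ 2 / 2 := by field_simp

theorem stmt6_general (c₁ c₂ C : ℝ) (hc₁ : 0 < c₁) (hC : 0 < C) :
    ∃ C' > 0, ∀ v b u : ℝ, 0 ≤ v → v ≤ 1 → c₁ ≤ b → b ≤ c₂ → 1 ≤ u →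
      (1 + C * v) * (1 - v ^ 2 / 2) ^ (b * u) ≤ 1 + C' / u := by
  refine ⟨C ^ 2 / (2 * c₁), by positivity, fun v b u hv₀ hv₁ hb _ hu => ?_⟩
  have hu₀ : 0 < u := by linarith
  have hy : c₁ * u * v ^ 2 / 2 ≤ v ^ 2 / 2 * (b * u) := by
    have : c₁ * u ≤ b * u := by gcongr
    nlinarith [sq_nonneg v]
  have hAMGM : C * v ≤ C ^ 2 / (2 * c₁) / u + c₁ * u * v ^ 2 / 2 := by
    rw [div_div, mul_assoc]
    exact mul_le_sq_div_add_mul_sq (mul_pos hc₁ hu₀) C v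
  calc (1 + C * v) * (1 - v ^ 2 / 2) ^ (b * u)
      ≤ (1 + C * v) * exp (-(v ^ 2 / 2 * (b * u))) := by
        gcongr
        exact one_sub_rpow_le_exp_neg_mul (by nlinarith) (by nlinarith)
    _ ≤ 1 + C ^ 2 / (2 * c₁) / u :=
        one_add_mul_exp_neg_le (by positivity) ((by positivity : (0 : ℝ) ≤ _).trans hy)
          (by positivity) (by linarith)

theorem stmt6 (c₁ c₂ C : ℝ) (hc₁ : 0 < c₁) (hc : c₁ ≤ c₂) (hC : 0 < C) :
    ∃ C' > 0, ∀ v b u : ℝ, 0 ≤ v → v ≤ 1 → c₁ ≤ b → b ≤ c₂ → 1 ≤ u →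
      (1 + C * v) * (1 - v ^ 2 / 2) ^ (b * u) ≤ 1 + C' / u :=
  stmt6_general c₁ c₂ C hc₁ hC
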